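/- Let f be an excursion and ε ∈ (0,1). Then sup_{s,t∈[0,1]} |d_L[f](s,t) − d_L[J^ε f](s,t)| ≤ 2·sup_{t∈[0,1]} |Jf(t) − J^ε f(t)|. -/

import Mathlib

open Set Filter Topology
open scoped Classical

noncomputable section

/-- Left limit of `f` at `t`, with the convention `f(0−) = 0`. -/
def lm (f : ℝ → ℝ) (t : ℝ) : ℝ := if t = 0 then 0 else Function.leftLim f t

/-- The jump `Δ_t(f) = f t − f(t−)`. -/
def jump (f : ℝ → ℝ) (t : ℝ) : ℝ := f t - lm f t

/-- `inf_{[s,t]} f`. -/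
def infIcc (f : ℝ → ℝ) (s t : ℝ) : ℝ := sInf (f '' Icc s t)

/-- An excursion: a càdlàg function on `[0,1]`, nonnegative, vanishing at `1` (and
extended by `0` outside `[0,1]`), all of whose jumps are nonnegative. -/
structure IsExcursion (f : ℝ → ℝ) : Prop where
  nonneg : ∀ t ∈ Icc (0:ℝ) 1, 0 ≤ f t
  zero_outside : ∀ t, t ∉ Icc (0:ℝ) 1 → f t = 0
  rightCont : ∀ t ∈ Ico (0:ℝ) 1, Tendsto f (𝓝[>] t) (𝓝 (f t))
  leftLimEx : ∀ t ∈ Ioc (0:ℝ) 1, Tendsto f (𝓝[<] t) (𝓝 (Function.leftLim f t))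
  one : f 1 = 0
  jump_nonneg : ∀ t ∈ Icc (0:ℝ) 1, 0 ≤ jump f t

/-- The genealogical relation `s ⪯_f t` : `s ≤ t` and `f(s−) ≤ inf_{[s,t]} f`. -/
def pre (f : ℝ → ℝ) (s t : ℝ) : Prop := s ≤ t ∧ lm f s ≤ infIcc f s t

/-- `x_s^t(f) = 1_{s ≤ t} · max(inf_{[s,t]} f − f(s−), 0)`. -/
def xst (f : ℝ → ℝ) (s t : ℝ) : ℝ := if s ≤ t then max (infIcc f s t - lm f s) 0 else 0

/-- The most recent common ancestor `s ∧_f t`. -/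
def mrca (f : ℝ → ℝ) (s t : ℝ) : ℝ := sSup {r : ℝ | 0 ≤ r ∧ pre f r s ∧ pre f r t}

/-- `δ_t(a,b) = min(|a−b|, Δ_t(f) − |a−b|)`, the circle pseudo-distance on `[0, Δ_t(f)]`. -/
def cdel (f : ℝ → ℝ) (t a b : ℝ) : ℝ := min |a - b| (jump f t - |a - b|)

/-- `d_O(s,t) = ∑_{s ≺_f r ⪯_f t} δ_r(0, x_r^t)`. -/
def dO (f : ℝ → ℝ) (s t : ℝ) : ℝ :=
  ∑' r : ℝ, if pre f s r ∧ s < r ∧ pre f r t then cdel f r 0 (xst f r t) else 0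

/-- `d_T(s,t) = f t − inf_{[s,t]} f − ∑_{s ≺_f r ⪯_f t} x_r^t`, intended for `s ⪯_f t`. -/
def dTanc (f : ℝ → ℝ) (s t : ℝ) : ℝ :=
  f t - infIcc f s t - ∑' r : ℝ, if pre f s r ∧ s < r ∧ pre f r t then xst f r t else 0

/-- The looptree pseudo-distance `d_L[f]`. -/
def dL (f : ℝ → ℝ) (s t : ℝ) : ℝ :=
  cdel f (mrca f s t) (xst f (mrca f s t) s) (xst f (mrca f s t) t)
    + dO f (mrca f s t) s + dO f (mrca f s t) t

/-- The tree pseudo-distance `d_T[f]`. -/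
def dT (f : ℝ → ℝ) (s t : ℝ) : ℝ := dTanc f (mrca f s t) s + dTanc f (mrca f s t) t

/-- The vernation pseudo-distance `d_V[f] = d_T[f] + 2·d_L[f]`. -/
def dV (f : ℝ → ℝ) (s t : ℝ) : ℝ := dT f s t + 2 * dL f s t

/-- `Jf(t) = ∑_{r ⪯_f t} x_r^t(f)`. -/
def Jop (f : ℝ → ℝ) (t : ℝ) : ℝ := ∑' r : ℝ, if pre f r t then xst f r t else 0

/-- `J^ε f(t) = ∑_{r ⪯_f t, Δ_r(f) ≥ ε} x_r^t(f)`. -/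
def Jeps (f : ℝ → ℝ) (ε : ℝ) (t : ℝ) : ℝ :=
  ∑' r : ℝ, if pre f r t ∧ ε ≤ jump f r then xst f r t else 0

/-- Pure jump growth (PJG) excursion: `f(t) = ∑_{r ⪯_f t} x_r^t(f)` on `[0,1]`. -/
def IsPJG (f : ℝ → ℝ) : Prop := ∀ t ∈ Icc (0:ℝ) 1, f t = Jop f t

/-- An increasing bijection from `[0,1]` onto itself. -/
def IncBij (l : ℝ → ℝ) : Prop :=
  StrictMonoOn l (Icc (0:ℝ) 1) ∧ Set.BijOn l (Icc (0:ℝ) 1) (Icc (0:ℝ) 1)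

/-- The Skorokhod distance `ρ` on functions `[0,1] → ℝ`. -/
def skor (f g : ℝ → ℝ) : ℝ :=
  sInf {c : ℝ | 0 ≤ c ∧ ∃ l : ℝ → ℝ, IncBij l ∧
    ∀ x ∈ Icc (0:ℝ) 1, |l x - x| ≤ c ∧ |f x - g (l x)| ≤ c}

/-!
Let `F` be the finite set of times at which `f` jumps by at least `ε`, so that
`J^ε f(u) = ∑_{q ∈ F} x_q^u(f)`. The genealogy of `J^ε f` is read off from that of `f`:
`x_r^u(J^ε f)` and `Δ_r(J^ε f)` are `x_r^u(f)` and `Δ_r(f)` for `r ∈ F` and vanish otherwise,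
and every `f`-ancestor is a `J^ε f`-ancestor, so `m = s ∧_f t ≤ m' = s ∧_{J^ε f} t`. Comparing
the two loop distances branch by branch, big loops above `m'` contribute equally, big loops
strictly between `m` and `m'` are not visited, and the loops at `m` and `m'` cancel up to
`δ_m(x_m^s, x_m^t)`, which vanishes when `m ∈ F`. What remains is a sum of terms
`δ_r(0, x_r^u) ≤ x_r^u` over small jumps `r` on the branches to `u = s, t`, which is at most
`Jf(u) - J^ε f(u) = ∑_{r ∉ F} x_r^u`. Hence
`0 ≤ d_L[f] - d_L[J^ε f] ≤ (Jf - J^ε f)(s) + (Jf - J^ε f)(t)`.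
-/

section Infimum

variable {φ : ℝ → ℝ} {a b c r : ℝ}

lemma infIcc_le (hφ : BddBelow (range φ)) (hr : r ∈ Icc a b) : infIcc φ a b ≤ φ r :=
  csInf_le (hφ.mono (image_subset_range _ _)) (mem_image_of_mem φ hr)

lemma le_infIcc (hab : a ≤ b) (h : ∀ r ∈ Icc a b, c ≤ φ r) : c ≤ infIcc φ a b :=
  le_csInf ((nonempty_Icc.2 hab).image φ) (forall_mem_image.2 h)

lemma infIcc_anti (hφ : BddBelow (range φ)) {a' b' : ℝ} (ha : a' ≤ a) (hb : b ≤ b')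
    (hab : a ≤ b) : infIcc φ a' b' ≤ infIcc φ a b :=
  csInf_le_csInf (hφ.mono (image_subset_range _ _)) ((nonempty_Icc.2 hab).image φ)
    (image_mono (Icc_subset_Icc ha hb))

lemma infIcc_self : infIcc φ r r = φ r := by
  simp [infIcc]

lemma infIcc_eq_min (hφ : BddBelow (range φ)) (har : a ≤ r) (hrb : r ≤ b) :
    infIcc φ a b = min (infIcc φ a r) (infIcc φ r b) := by
  rw [infIcc, ← Icc_union_Icc_eq_Icc har hrb, image_union,
    csInf_union (hφ.mono (image_subset_range _ _)) ((nonempty_Icc.2 har).image φ)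
      (hφ.mono (image_subset_range _ _)) ((nonempty_Icc.2 hrb).image φ)]
  rfl

end Infimum

section Xst

variable {φ : ℝ → ℝ} {q r u w : ℝ}

lemma xst_nonneg : 0 ≤ xst φ r u := by
  unfold xst; split_ifs <;> simp

lemma xst_of_pre (h : pre φ r u) : xst φ r u = infIcc φ r u - lm φ r := by
  rw [xst, if_pos h.1, max_eq_left (sub_nonneg.2 h.2)]

lemma xst_eq_zero_of_not_pre (h : ¬ pre φ r u) : xst φ r u = 0 := by
  unfold xst pre at *
  split_ifs with hru
  · exact max_eq_right (by linarith [not_le.1 (not_and.1 h hru)])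
  · rfl

lemma pre_of_xst_ne_zero (h : xst φ r u ≠ 0) : pre φ r u :=
  not_imp_comm.1 xst_eq_zero_of_not_pre h

lemma xst_anti (hφ : BddBelow (range φ)) (hqw : q ≤ w) (hwu : w ≤ u) :
    xst φ q u ≤ xst φ q w := by
  rw [xst, xst, if_pos (hqw.trans hwu), if_pos hqw]
  exact max_le_max_right _ (sub_le_sub_right (infIcc_anti hφ le_rfl hwu hqw) _)

lemma pre_of_pre_of_le (hφ : BddBelow (range φ)) (h : pre φ q u) (hqr : q ≤ r) (hru : r ≤ u) :
    pre φ q r :=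
  ⟨hqr, h.2.trans (infIcc_anti hφ le_rfl hru hqr)⟩

end Xst

section Mrca

variable {φ : ℝ → ℝ} {r s t : ℝ}

lemma bddAbove_commonAncestors : BddAbove {r : ℝ | 0 ≤ r ∧ pre φ r s ∧ pre φ r t} :=
  ⟨s, fun _ hr => hr.2.1.1⟩

lemma le_mrca (hr : 0 ≤ r) (hrs : pre φ r s) (hrt : pre φ r t) : r ≤ mrca φ s t :=
  le_csSup bddAbove_commonAncestors ⟨hr, hrs, hrt⟩

lemma mrca_comm (φ : ℝ → ℝ) (s t : ℝ) : mrca φ s t = mrca φ t s := by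
  simp only [mrca, and_comm]

end Mrca

section Cdel

variable {φ : ℝ → ℝ} {r a b : ℝ}

lemma cdel_nonneg (ha : 0 ≤ a) (ha' : a ≤ jump φ r) (hb : 0 ≤ b) (hb' : b ≤ jump φ r) :
    0 ≤ cdel φ r a b :=
  le_min (abs_nonneg _) (sub_nonneg.2 (abs_sub_le_iff.2 ⟨by linarith, by linarith⟩))

lemma cdel_le_abs_sub : cdel φ r a b ≤ |a - b| :=
  min_le_left _ _

lemma cdel_zero_le (ha : 0 ≤ a) : cdel φ r 0 a ≤ a := by
  simpa [abs_of_nonneg ha] using cdel_le_abs_sub (φ := φ) (r := r) (a := 0) (b := a)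

end Cdel

/-- What the genealogy lemmas need of a function: an excursion without right-continuity, whose
properties, unlike those of `IsExcursion`, are readily checked for `Jeps f ε`. -/
structure IsWeakExcursion (φ : ℝ → ℝ) : Prop where
  nonneg : ∀ x, 0 ≤ φ x
  eq_zero_of_neg : ∀ x < 0, φ x = 0
  tendsto_lm : ∀ r, Tendsto φ (𝓝[<] r) (𝓝 (lm φ r))
  jump_nonneg : ∀ r, 0 ≤ jump φ r

namespace IsWeakExcursion

variable {φ : ℝ → ℝ} (hφ : IsWeakExcursion φ) {a b q r s t u : ℝ}
include hφ

lemma bddBelow : BddBelow (range φ) :=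
  ⟨0, forall_mem_range.2 hφ.nonneg⟩

lemma lm_nonneg (r : ℝ) : 0 ≤ lm φ r :=
  ge_of_tendsto' (hφ.tendsto_lm r) hφ.nonneg

lemma lm_le_self (r : ℝ) : lm φ r ≤ φ r :=
  sub_nonneg.1 (hφ.jump_nonneg r)

lemma infIcc_le_lm (har : a < r) (hrb : r ≤ b) : infIcc φ a b ≤ lm φ r := by
  refine ge_of_tendsto (hφ.tendsto_lm r) ?_
  filter_upwards [Ioo_mem_nhdsLT har] with w hw
  exact infIcc_le hφ.bddBelow ⟨hw.1.le, hw.2.le.trans hrb⟩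

lemma tendsto_infIcc_nhdsLT (har : a < r) :
    Tendsto (infIcc φ a) (𝓝[<] r) (𝓝 (infIcc φ a r)) := by
  refine tendsto_order.2 ⟨fun c hc => ?_, fun c hc => ?_⟩
  · filter_upwards [Ioo_mem_nhdsLT har] with w hw
    exact hc.trans_le (infIcc_anti hφ.bddBelow le_rfl hw.2.le hw.1.le)
  · obtain ⟨_, ⟨y, hy, rfl⟩, hyc⟩ :=
      exists_lt_of_csInf_lt ((nonempty_Icc.2 har.le).image φ) hc
    rcases hy.2.lt_or_eq with hyr | rfl
    · filter_upwards [Ioo_mem_nhdsLT hyr] with w hw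
      exact (infIcc_le hφ.bddBelow ⟨hy.1, hw.1.le⟩).trans_lt hyc
    · filter_upwards [Ioo_mem_nhdsLT har,
        (hφ.tendsto_lm y).eventually (gt_mem_nhds ((hφ.lm_le_self y).trans_lt hyc))] with w hw hwc
      exact (infIcc_le hφ.bddBelow ⟨hw.1.le, le_rfl⟩).trans_lt hwc

lemma jump_lt_of_abs_sub_lt {c η : ℝ} (h : ∀ w ∈ Ioo a b, |φ w - c| < η) (hq : q ∈ Ioo a b) :
    jump φ q < 2 * η := by
  have hlm : c - η ≤ lm φ q := by
    refine ge_of_tendsto (hφ.tendsto_lm q) ?_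
    filter_upwards [Ioo_mem_nhdsLT hq.1] with w hw
    linarith [(abs_lt.1 (h w ⟨hw.1, hw.2.trans hq.2⟩)).1]
  rw [jump]
  linarith [(abs_lt.1 (h q hq)).2]

lemma xst_le_jump : xst φ r u ≤ jump φ r := by
  by_cases h : pre φ r u
  · rw [xst_of_pre h, jump]
    linarith [infIcc_le hφ.bddBelow ⟨le_rfl, h.1⟩ (φ := φ) (b := u)]
  · rw [xst_eq_zero_of_not_pre h]
    exact hφ.jump_nonneg r

lemma xst_self : xst φ r r = jump φ r := by
  rw [xst, if_pos le_rfl, infIcc_self]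
  exact max_eq_left (hφ.jump_nonneg r)

lemma xst_eq_zero_of_eq_zero {w : ℝ} (hw : w ∈ Icc q u) (h : φ w = 0) : xst φ q u = 0 := by
  rw [xst, if_pos (hw.1.trans hw.2)]
  refine max_eq_right (sub_nonpos.2 ?_)
  calc infIcc φ q u ≤ φ w := infIcc_le hφ.bddBelow hw
    _ = 0 := h
    _ ≤ lm φ q := hφ.lm_nonneg q

lemma pre_zero (hu : 0 ≤ u) : pre φ 0 u :=
  ⟨hu, le_infIcc hu fun _ _ => by rw [lm, if_pos rfl]; exact hφ.nonneg _⟩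

lemma pre_trans (hqr : pre φ q r) (hru : pre φ r u) : pre φ q u := by
  refine ⟨hqr.1.trans hru.1, ?_⟩
  rcases hqr.1.eq_or_lt with rfl | hlt
  · exact hru.2
  · rw [infIcc_eq_min hφ.bddBelow hqr.1 hru.1]
    exact le_min hqr.2 (hqr.2.trans ((hφ.infIcc_le_lm hlt le_rfl).trans hru.2))

lemma xst_eq_xst_of_pre (hru : pre φ r u) (hqr : q < r) : xst φ q r = xst φ q u := by
  by_cases hq : pre φ q r
  · have hinf : infIcc φ q u = infIcc φ q r := by
      rw [infIcc_eq_min hφ.bddBelow hq.1 hru.1,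
        min_eq_left ((hφ.infIcc_le_lm hqr le_rfl).trans hru.2)]
    rw [xst_of_pre hq, xst_of_pre (hφ.pre_trans hq hru), hinf]
  · rw [xst_eq_zero_of_not_pre hq, xst_eq_zero_of_not_pre fun h =>
      hq (pre_of_pre_of_le hφ.bddBelow h hqr.le hru.1)]

lemma pre_csSup {T : Set ℝ} (hne : T.Nonempty) (hbdd : BddAbove T) (hT : ∀ r ∈ T, pre φ r u)
    (hu : sSup T ≤ u) : pre φ (sSup T) u := by
  refine ⟨hu, not_lt.1 fun hlt => ?_⟩
  obtain ⟨c, hIc, hcm⟩ := exists_between hlt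
  obtain ⟨l, hl, hsub⟩ := mem_nhdsLT_iff_exists_Ioo_subset.1
    ((hφ.tendsto_lm (sSup T)).eventually (lt_mem_nhds hcm))
  obtain ⟨r, hrT, hlr⟩ := exists_lt_of_lt_csSup hne hl
  have hrm : r < sSup T := (le_csSup hbdd hrT).lt_of_ne fun h => hlt.not_ge (h ▸ (hT r hrT).2)
  have hcr : c ≤ lm φ r := by
    refine ge_of_tendsto (hφ.tendsto_lm r) ?_
    filter_upwards [Ioo_mem_nhdsLT hlr] with w hw
    exact (hsub ⟨hw.1, hw.2.trans hrm⟩).le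
  linarith [(hT r hrT).2, infIcc_anti hφ.bddBelow hrm.le le_rfl hu (φ := φ)]

lemma sum_xst_le_infIcc_max' {E : Finset ℝ} (hne : E.Nonempty) (hE : ∀ r ∈ E, pre φ r u) :
    ∑ r ∈ E, xst φ r u ≤ infIcc φ (E.max' hne) u := by
  induction E using Finset.induction_on_max with
  | empty => exact absurd hne Finset.not_nonempty_empty
  | insert a E hlt ih =>
    have ha : pre φ a u := hE a (Finset.mem_insert_self a E)
    have hmax : (insert a E).max' hne = a :=
      le_antisymm (Finset.max'_le _ _ _ fun y hy => (Finset.mem_insert.1 hy).elim le_of_eq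
        fun hy => (hlt y hy).le) (Finset.le_max' _ a (Finset.mem_insert_self a E))
    rw [hmax, Finset.sum_insert fun h => (hlt a h).false, xst_of_pre ha]
    rcases E.eq_empty_or_nonempty with rfl | hE'
    · simpa using hφ.lm_nonneg a
    · have hsum := ih hE' fun r hr => hE r (Finset.mem_insert_of_mem hr)
      have hlm := hφ.infIcc_le_lm (hlt _ (E.max'_mem hE')) ha.1
      linarith

lemma sum_xst_le (E : Finset ℝ) : ∑ r ∈ E, xst φ r u ≤ φ u := by
  rw [← Finset.sum_filter_of_ne fun r _ h => pre_of_xst_ne_zero h]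
  rcases (E.filter fun r => pre φ r u).eq_empty_or_nonempty with h | h
  · rw [h, Finset.sum_empty]
    exact hφ.nonneg u
  · have hpre : ∀ r ∈ E.filter fun r => pre φ r u, pre φ r u :=
      fun r hr => (Finset.mem_filter.1 hr).2
    exact (hφ.sum_xst_le_infIcc_max' h hpre).trans
      (infIcc_le hφ.bddBelow ⟨(hpre _ (Finset.max'_mem _ h)).1, le_rfl⟩)

lemma summable_xst (u : ℝ) : Summable fun r => xst φ r u :=
  summable_of_sum_le (fun _ => xst_nonneg) hφ.sum_xst_le

lemma zero_mem_commonAncestors (hs : 0 ≤ s) (ht : 0 ≤ t) :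
    (0 : ℝ) ∈ {r : ℝ | 0 ≤ r ∧ pre φ r s ∧ pre φ r t} :=
  ⟨le_rfl, hφ.pre_zero hs, hφ.pre_zero ht⟩

lemma mrca_nonneg (hs : 0 ≤ s) (ht : 0 ≤ t) : 0 ≤ mrca φ s t :=
  le_mrca le_rfl (hφ.pre_zero hs) (hφ.pre_zero ht)

lemma pre_mrca_left (hs : 0 ≤ s) (ht : 0 ≤ t) : pre φ (mrca φ s t) s :=
  hφ.pre_csSup ⟨0, hφ.zero_mem_commonAncestors hs ht⟩ bddAbove_commonAncestors
    (fun _ hr => hr.2.1) (csSup_le ⟨0, hφ.zero_mem_commonAncestors hs ht⟩ fun _ hr => hr.2.1.1)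

lemma pre_mrca_right (hs : 0 ≤ s) (ht : 0 ≤ t) : pre φ (mrca φ s t) t :=
  hφ.pre_csSup ⟨0, hφ.zero_mem_commonAncestors hs ht⟩ bddAbove_commonAncestors
    (fun _ hr => hr.2.2) (csSup_le ⟨0, hφ.zero_mem_commonAncestors hs ht⟩ fun _ hr => hr.2.2.1)

lemma cdel_self {a : ℝ} : cdel φ r a a = 0 := by
  rw [cdel, sub_self, abs_zero, sub_zero]
  exact min_eq_left (hφ.jump_nonneg r)

lemma cdel_eq_add {a b : ℝ} (h : a = 0 ∨ b = 0) :
    cdel φ r a b = cdel φ r 0 a + cdel φ r 0 b := by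
  rcases h with rfl | rfl
  · rw [hφ.cdel_self, zero_add]
  · rw [hφ.cdel_self, add_zero, cdel, cdel, zero_sub, abs_neg, sub_zero]

lemma cdel_zero_xst_nonneg : 0 ≤ cdel φ r 0 (xst φ r u) :=
  cdel_nonneg le_rfl (hφ.jump_nonneg r) xst_nonneg hφ.xst_le_jump

lemma summable_ite_cdel_zero_xst (P : ℝ → Prop) [DecidablePred P] (u : ℝ) :
    Summable fun r => if P r then cdel φ r 0 (xst φ r u) else 0 :=
  (hφ.summable_xst u).of_nonneg_of_le
    (fun r => by split_ifs; exacts [hφ.cdel_zero_xst_nonneg, le_rfl])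
    (fun r => by split_ifs; exacts [cdel_zero_le xst_nonneg, xst_nonneg])

lemma dO_eq_tsum (h : pre φ a u) :
    dO φ a u = ∑' r, if a < r then cdel φ r 0 (xst φ r u) else 0 :=
  tsum_congr fun r => by
    by_cases har : a < r
    · by_cases hru : pre φ r u
      · rw [if_pos ⟨pre_of_pre_of_le hφ.bddBelow h har.le hru.1, har, hru⟩, if_pos har]
      · rw [if_neg fun h' => hru h'.2.2, if_pos har, xst_eq_zero_of_not_pre hru, hφ.cdel_self]
    · rw [if_neg fun h' => har h'.2.1, if_neg har]

lemma ite_xst_sub_xst_nonneg (hru : r ≤ u) (q : ℝ) :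
    0 ≤ if q < r then xst φ q r - xst φ q u else 0 := by
  split_ifs with hqr
  · exact sub_nonneg.2 (xst_anti hφ.bddBelow hqr.le hru)
  · exact le_rfl

lemma sum_ite_xst_sub_xst_eq_zero (h : pre φ r u) (F : Finset ℝ) :
    ∑ q ∈ F, (if q < r then xst φ q r - xst φ q u else 0) = 0 :=
  Finset.sum_eq_zero fun q _ => by
    split_ifs with hqr
    · rw [hφ.xst_eq_xst_of_pre h hqr, sub_self]
    · rfl

end IsWeakExcursion

namespace IsExcursion

variable {f : ℝ → ℝ} (hf : IsExcursion f) {r ε : ℝ}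
include hf

lemma nonneg' (x : ℝ) : 0 ≤ f x := by
  by_cases hx : x ∈ Icc (0:ℝ) 1
  · exact hf.nonneg x hx
  · rw [hf.zero_outside x hx]

lemma eq_zero_of_one_le (hr : 1 ≤ r) : f r = 0 := by
  rcases hr.eq_or_lt with rfl | hr
  · exact hf.one
  · exact hf.zero_outside r fun h => h.2.not_gt hr

lemma eventuallyEq_zero (hr : r ∉ Icc (0:ℝ) 1) : f =ᶠ[𝓝 r] 0 :=
  Filter.mem_of_superset (isClosed_Icc.isOpen_compl.mem_nhds hr) hf.zero_outside

lemma tendsto_lm (r : ℝ) : Tendsto f (𝓝[<] r) (𝓝 (lm f r)) := by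
  rcases eq_or_ne r 0 with rfl | hr0
  · rw [lm, if_pos rfl]
    refine tendsto_const_nhds.congr' (Filter.mem_of_superset self_mem_nhdsWithin fun x hx => ?_)
    exact (hf.zero_outside x fun h => h.1.not_gt hx).symm
  · rw [lm, if_neg hr0]
    by_cases hr : r ∈ Icc (0:ℝ) 1
    · exact hf.leftLimEx r ⟨hr.1.lt_of_ne' hr0, hr.2⟩
    · have h : Tendsto f (𝓝[<] r) (𝓝 0) :=
        tendsto_const_nhds.congr' ((hf.eventuallyEq_zero hr).filter_mono nhdsWithin_le_nhds).symm
      rwa [leftLim_eq_of_tendsto h]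

lemma tendsto_nhdsGT (r : ℝ) : Tendsto f (𝓝[>] r) (𝓝 (f r)) := by
  by_cases hr : r ∈ Ico (0:ℝ) 1
  · exact hf.rightCont r hr
  have hzero : ∀ᶠ x in 𝓝[≥] r, f x = 0 := by
    rcases not_and_or.1 hr with hr0 | hr1
    · exact nhdsWithin_le_nhds (hf.eventuallyEq_zero fun h => hr0 h.1)
    · exact Filter.mem_of_superset self_mem_nhdsWithin fun x hx =>
        hf.eq_zero_of_one_le ((not_lt.1 hr1).trans hx)
  rw [hzero.self_of_nhdsWithin (mem_Ici.2 le_rfl)]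
  exact tendsto_const_nhds.congr' (EventuallyEq.symm (nhdsWithin_mono _ Ioi_subset_Ici_self hzero))

lemma jump_eq_zero (hr : r ∉ Icc (0:ℝ) 1) : jump f r = 0 := by
  have h : Tendsto f (𝓝[<] r) (𝓝 0) :=
    tendsto_const_nhds.congr' ((hf.eventuallyEq_zero hr).filter_mono nhdsWithin_le_nhds).symm
  rw [jump, tendsto_nhds_unique (hf.tendsto_lm r) h, hf.zero_outside r hr, sub_zero]

lemma isWeakExcursion : IsWeakExcursion f where
  nonneg := hf.nonneg'
  eq_zero_of_neg x hx := hf.zero_outside x fun h => h.1.not_gt hx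
  tendsto_lm := hf.tendsto_lm
  jump_nonneg r := by
    by_cases hr : r ∈ Icc (0:ℝ) 1
    · exact hf.jump_nonneg r hr
    · exact (hf.jump_eq_zero hr).ge

lemma eventually_jump_lt (hε : 0 < ε) (z : ℝ) : ∀ᶠ q in 𝓝[≠] z, jump f q < ε := by
  have hball : ∀ {c : ℝ} {S : Set ℝ}, S ⊆ f ⁻¹' Metric.ball c (ε / 2) →
      ∀ w ∈ S, |f w - c| < ε / 2 := fun hS w hw => by
    simpa [Real.dist_eq] using hS hw
  rw [← nhdsLT_sup_nhdsGT, Filter.eventually_sup]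
  constructor
  · obtain ⟨l, hl, hsub⟩ := mem_nhdsLT_iff_exists_Ioo_subset.1
      ((hf.tendsto_lm z).eventually (Metric.ball_mem_nhds _ (half_pos hε)))
    filter_upwards [Ioo_mem_nhdsLT hl] with q hq
    linarith [hf.isWeakExcursion.jump_lt_of_abs_sub_lt (hball hsub) hq]
  · obtain ⟨u, hu, hsub⟩ := mem_nhdsGT_iff_exists_Ioo_subset.1
      ((hf.tendsto_nhdsGT z).eventually (Metric.ball_mem_nhds _ (half_pos hε)))
    filter_upwards [Ioo_mem_nhdsGT hu] with q hq
    linarith [hf.isWeakExcursion.jump_lt_of_abs_sub_lt (hball hsub) hq]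

lemma finite_setOf_le_jump (hε : 0 < ε) : {q | ε ≤ jump f q}.Finite := by
  by_contra hinf
  have hsub : {q | ε ≤ jump f q} ⊆ Icc 0 1 := fun q hq => by
    by_contra hq'
    exact (hf.jump_eq_zero hq' ▸ hq : ε ≤ 0).not_gt hε
  obtain ⟨z, -, hz⟩ := Set.Infinite.exists_accPt_of_subset_isCompact hinf isCompact_Icc hsub
  obtain ⟨q, hq, hlt⟩ :=
    ((accPt_iff_frequently_nhdsNE.1 hz).and_eventually (hf.eventually_jump_lt hε z)).exists
  exact (show ε ≤ jump f q from hq).not_gt hlt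

end IsExcursion

section Jeps

variable {φ : ℝ → ℝ} {ε : ℝ} {F : Finset ℝ} {u : ℝ}

lemma Jop_eq_tsum : Jop φ u = ∑' r, xst φ r u :=
  tsum_congr fun r => by
    split_ifs with h
    · rfl
    · exact (xst_eq_zero_of_not_pre h).symm

lemma Jeps_nonneg : 0 ≤ Jeps φ ε u :=
  tsum_nonneg fun r => by split_ifs <;> simp [xst_nonneg]

lemma Jeps_eq_tsum (hF : ∀ q, q ∈ F ↔ ε ≤ jump φ q) :
    Jeps φ ε u = ∑' r, if r ∈ F then xst φ r u else 0 :=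
  tsum_congr fun r => by
    by_cases hp : pre φ r u <;> by_cases hr : r ∈ F <;>
      simp [hp, hr, ← hF r, xst_eq_zero_of_not_pre]

lemma Jeps_eq_sum (hF : ∀ q, q ∈ F ↔ ε ≤ jump φ q) : Jeps φ ε u = ∑ q ∈ F, xst φ q u := by
  rw [Jeps_eq_tsum hF, tsum_eq_sum fun r hr => if_neg hr]
  exact Finset.sum_congr rfl fun r hr => if_pos hr

end Jeps

namespace IsWeakExcursion

variable {f : ℝ → ℝ} (hf : IsWeakExcursion f) {ε : ℝ} {F : Finset ℝ}
  (hF : ∀ q, q ∈ F ↔ ε ≤ jump f q) {q r s t u x : ℝ}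
include hf

lemma xst_le_ite_add (hrx : r ≤ x) (hxu : x ≤ u) :
    xst f q x ≤ (if q ≤ r then xst f q u else 0) + (f x - infIcc f r u) := by
  have hI : infIcc f r u ≤ f x := infIcc_le hf.bddBelow ⟨hrx, hxu⟩
  split_ifs with hqr
  · have hqx := hqr.trans hrx
    have hmin := infIcc_eq_min hf.bddBelow hqr (hrx.trans hxu) (φ := f)
    have h1 := infIcc_anti hf.bddBelow le_rfl hrx hqr (φ := f)
    have h2 := infIcc_le hf.bddBelow ⟨hqx, le_rfl⟩ (φ := f) (a := q)
    rw [xst, xst, if_pos hqx, if_pos (hqx.trans hxu)]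
    refine max_le ?_ (by linarith [le_max_right (infIcc f q u - lm f q) 0])
    rcases le_total (infIcc f q r) (infIcc f r u) with h | h
    · rw [min_eq_left h] at hmin
      linarith [le_max_left (infIcc f q u - lm f q) 0]
    · rw [min_eq_right h] at hmin
      linarith [le_max_left (infIcc f q u - lm f q) 0]
  · by_cases hp : pre f q x
    · have hlm := hf.infIcc_le_lm (not_le.1 hqr) (hp.1.trans hxu)
      rw [xst_of_pre hp]
      linarith [infIcc_le hf.bddBelow ⟨hp.1, le_rfl⟩ (φ := f) (a := q)]
    · rw [xst_eq_zero_of_not_pre hp]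
      linarith

lemma tendsto_xst_nhdsLT (q r : ℝ) :
    Tendsto (xst f q) (𝓝[<] r) (𝓝 (if q < r then xst f q r else 0)) := by
  split_ifs with hqr
  · rw [xst, if_pos hqr.le]
    refine (((hf.tendsto_infIcc_nhdsLT hqr).sub_const _).max tendsto_const_nhds).congr' ?_
    filter_upwards [Ioo_mem_nhdsLT hqr] with w hw
    rw [xst, if_pos hw.1.le]
  · refine tendsto_const_nhds.congr' ?_
    filter_upwards [self_mem_nhdsWithin] with w hw
    rw [xst, if_neg fun h => hqr (h.trans_lt hw)]

include hF

lemma Jop_sub_Jeps :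
    Jop f u - Jeps f ε u = ∑' r, if r ∈ F then 0 else xst f r u := by
  rw [Jop_eq_tsum, Jeps_eq_tsum hF, ← (hf.summable_xst u).tsum_sub
    (summable_of_ne_finset_zero fun r hr => if_neg hr)]
  exact tsum_congr fun r => by split_ifs <;> simp

lemma infIcc_Jeps (hru : r ≤ u) :
    infIcc (Jeps f ε) r u = ∑ q ∈ F, if q ≤ r then xst f q u else 0 := by
  have hbdd : BddBelow (range (Jeps f ε)) := ⟨0, forall_mem_range.2 fun _ => Jeps_nonneg⟩
  refine le_antisymm (le_of_forall_pos_le_add fun η hη => ?_) (le_infIcc hru fun w hw => ?_)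
  · have hδ : 0 < η / (F.card + 1) := by positivity
    obtain ⟨_, ⟨x, hx, rfl⟩, hxlt⟩ := exists_lt_of_csInf_lt ((nonempty_Icc.2 hru).image f)
      (lt_add_of_pos_right (infIcc f r u) hδ)
    have hcard : (F.card : ℝ) * (η / (F.card + 1)) ≤ η := by
      rw [mul_div_assoc', div_le_iff₀ (by positivity)]
      nlinarith
    calc infIcc (Jeps f ε) r u ≤ Jeps f ε x := infIcc_le hbdd hx
      _ = ∑ q ∈ F, xst f q x := Jeps_eq_sum hF
      _ ≤ ∑ q ∈ F, ((if q ≤ r then xst f q u else 0) + (f x - infIcc f r u)) :=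
          Finset.sum_le_sum fun q _ => hf.xst_le_ite_add hx.1 hx.2
      _ = (∑ q ∈ F, if q ≤ r then xst f q u else 0) + F.card * (f x - infIcc f r u) := by
          rw [Finset.sum_add_distrib, Finset.sum_const, nsmul_eq_mul]
      _ ≤ (∑ q ∈ F, if q ≤ r then xst f q u else 0) + η := by
          gcongr
          exact (mul_le_mul_of_nonneg_left (by linarith) (Nat.cast_nonneg _)).trans hcard
  · rw [Jeps_eq_sum hF]
    refine Finset.sum_le_sum fun q _ => ?_
    split_ifs with hq
    · exact xst_anti hf.bddBelow (hq.trans hw.1) hw.2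
    · exact xst_nonneg

lemma tendsto_Jeps_nhdsLT (r : ℝ) :
    Tendsto (Jeps f ε) (𝓝[<] r) (𝓝 (∑ q ∈ F, if q < r then xst f q r else 0)) := by
  rw [show Jeps f ε = fun w => ∑ q ∈ F, xst f q w from funext fun w => Jeps_eq_sum hF]
  exact tendsto_finsetSum _ fun q _ => hf.tendsto_xst_nhdsLT q r

lemma lm_Jeps (r : ℝ) : lm (Jeps f ε) r = ∑ q ∈ F, if q < r then xst f q r else 0 := by
  rw [lm]
  split_ifs with hr0
  · subst hr0
    refine (Finset.sum_eq_zero fun q _ => ?_).symm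
    split_ifs with hq
    · exact hf.xst_eq_zero_of_eq_zero ⟨le_rfl, hq.le⟩ (hf.eq_zero_of_neg q hq)
    · rfl
  · exact leftLim_eq_of_tendsto (hf.tendsto_Jeps_nhdsLT hF r)

lemma jump_Jeps (r : ℝ) : jump (Jeps f ε) r = if r ∈ F then jump f r else 0 := by
  rw [jump, Jeps_eq_sum hF, hf.lm_Jeps hF, ← Finset.sum_sub_distrib, ← Finset.sum_ite_eq' F r]
  refine Finset.sum_congr rfl fun q _ => ?_
  rcases lt_trichotomy q r with h | rfl | h
  · simp [h, h.ne]
  · simp [hf.xst_self]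
  · simp [h.ne', h.not_gt, xst, h.not_ge]

lemma isWeakExcursion_Jeps : IsWeakExcursion (Jeps f ε) where
  nonneg _ := Jeps_nonneg
  eq_zero_of_neg x hx := by
    rw [Jeps_eq_sum hF]
    refine Finset.sum_eq_zero fun q _ => ?_
    by_cases hqx : q ≤ x
    · exact hf.xst_eq_zero_of_eq_zero ⟨hqx, le_rfl⟩ (hf.eq_zero_of_neg x hx)
    · rw [xst, if_neg hqx]
  tendsto_lm r := hf.lm_Jeps hF r ▸ hf.tendsto_Jeps_nhdsLT hF r
  jump_nonneg r := by
    rw [hf.jump_Jeps hF]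
    split_ifs
    exacts [hf.jump_nonneg r, le_rfl]

/-- Every term of the sum is nonnegative, so `r` is a `Jeps f ε`-ancestor of `u` only if all of
them vanish. -/
lemma infIcc_Jeps_sub_lm_Jeps (hru : r ≤ u) :
    infIcc (Jeps f ε) r u - lm (Jeps f ε) r =
      (if r ∈ F then xst f r u else 0) - ∑ q ∈ F, (if q < r then xst f q r - xst f q u else 0) := by
  rw [hf.infIcc_Jeps hF hru, hf.lm_Jeps hF, ← Finset.sum_ite_eq' F r fun q => xst f q u,
    ← Finset.sum_sub_distrib,
    ← Finset.sum_sub_distrib]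
  refine Finset.sum_congr rfl fun q _ => ?_
  rcases lt_trichotomy q r with h | rfl | h
  · simp [h, h.le, h.ne]
  · simp
  · simp [h.ne', h.not_ge, h.not_gt]

lemma pre_Jeps_of_pre (h : pre f r u) : pre (Jeps f ε) r u := by
  refine ⟨h.1, sub_nonneg.1 ?_⟩
  rw [hf.infIcc_Jeps_sub_lm_Jeps hF h.1, hf.sum_ite_xst_sub_xst_eq_zero h, sub_zero]
  split_ifs
  exacts [xst_nonneg, le_rfl]

lemma xst_Jeps (r u : ℝ) : xst (Jeps f ε) r u = if r ∈ F then xst f r u else 0 := by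
  by_cases hru : r ≤ u
  swap
  · simp [xst, hru]
  by_cases hp : pre f r u
  · rw [xst_of_pre (hf.pre_Jeps_of_pre hF hp), hf.infIcc_Jeps_sub_lm_Jeps hF hru,
      hf.sum_ite_xst_sub_xst_eq_zero hp, sub_zero]
  · rw [xst_eq_zero_of_not_pre hp, ite_self, xst, if_pos hru, hf.infIcc_Jeps_sub_lm_Jeps hF hru,
      xst_eq_zero_of_not_pre hp, ite_self, zero_sub]
    exact max_eq_right (neg_nonpos.2 (Finset.sum_nonneg fun q _ => hf.ite_xst_sub_xst_nonneg hru q))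

lemma xst_eq_xst_of_pre_Jeps (h : pre (Jeps f ε) r u) (hq : q ∈ F) (hqr : q < r) :
    xst f q r = xst f q u := by
  by_cases hp : pre f r u
  · exact hf.xst_eq_xst_of_pre hp hqr
  have hchar := hf.infIcc_Jeps_sub_lm_Jeps hF h.1
  rw [xst_eq_zero_of_not_pre hp, ite_self, zero_sub] at hchar
  have hsum : ∑ q ∈ F, (if q < r then xst f q r - xst f q u else 0) = 0 :=
    le_antisymm (by linarith [h.2]) (Finset.sum_nonneg fun q _ => hf.ite_xst_sub_xst_nonneg h.1 q)
  have hterm :=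
    (Finset.sum_eq_zero_iff_of_nonneg fun q _ => hf.ite_xst_sub_xst_nonneg h.1 q).1 hsum q hq
  rw [if_pos hqr] at hterm
  linarith

lemma cdel_Jeps_of_mem (hr : r ∈ F) (a b : ℝ) : cdel (Jeps f ε) r a b = cdel f r a b := by
  rw [cdel, cdel, hf.jump_Jeps hF, if_pos hr]

lemma cdel_xst_Jeps (r u : ℝ) :
    cdel (Jeps f ε) r 0 (xst (Jeps f ε) r u) = if r ∈ F then cdel f r 0 (xst f r u) else 0 := by
  rw [hf.xst_Jeps hF]
  split_ifs with hr
  · exact hf.cdel_Jeps_of_mem hF hr _ _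
  · exact (hf.isWeakExcursion_Jeps hF).cdel_self

lemma tsum_cdel_add_le_Jop_sub_Jeps (a u : ℝ) :
    (∑' r, if a < r ∧ r ∉ F then cdel f r 0 (xst f r u) else 0)
      + (if a ∈ F then 0 else xst f a u) ≤ Jop f u - Jeps f ε u := by
  have hS := hf.summable_ite_cdel_zero_xst (fun r => a < r ∧ r ∉ F) u
  have ha : Summable fun r => if r = a then (if a ∈ F then 0 else xst f a u) else 0 :=
    (hasSum_ite_eq a _).summable
  rw [hf.Jop_sub_Jeps hF, ← (hasSum_ite_eq a (if a ∈ F then 0 else xst f a u)).tsum_eq,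
    ← hS.tsum_add ha]
  refine (hS.add ha).tsum_le_tsum (fun r => ?_)
    ((hf.summable_xst u).of_nonneg_of_le (fun r => by split_ifs; exacts [le_rfl, xst_nonneg])
      (fun r => by split_ifs; exacts [xst_nonneg, le_rfl]))
  by_cases hra : r = a
  · subst hra
    simp
  · rw [if_neg hra, add_zero]
    split_ifs with h1 h2 h2
    · exact absurd h2 h1.2
    · exact cdel_zero_le xst_nonneg
    · exact le_rfl
    · exact xst_nonneg

variable (hs : 0 ≤ s) (ht : 0 ≤ t)
include hs ht

lemma mrca_le_mrca_Jeps : mrca f s t ≤ mrca (Jeps f ε) s t :=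
  le_mrca (hf.mrca_nonneg hs ht) (hf.pre_Jeps_of_pre hF (hf.pre_mrca_left hs ht))
    (hf.pre_Jeps_of_pre hF (hf.pre_mrca_right hs ht))

lemma xst_eq_xst_of_lt_mrca_Jeps (hq : q ∈ F) (hqm : q < mrca (Jeps f ε) s t) :
    xst f q s = xst f q t :=
  have hg := hf.isWeakExcursion_Jeps hF
  (hf.xst_eq_xst_of_pre_Jeps hF (hg.pre_mrca_left hs ht) hq hqm).symm.trans
    (hf.xst_eq_xst_of_pre_Jeps hF (hg.pre_mrca_right hs ht) hq hqm)

lemma xst_eq_zero_of_mem_Ioo_mrca (hq : q ∈ F)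
    (hmq : q ∈ Ioo (mrca f s t) (mrca (Jeps f ε) s t)) : xst f q s = 0 := by
  have heq := hf.xst_eq_xst_of_lt_mrca_Jeps hF hs ht hq hmq.2
  by_contra hne
  exact hmq.1.not_ge (le_mrca ((hf.mrca_nonneg hs ht).trans hmq.1.le)
    (pre_of_xst_ne_zero hne) (pre_of_xst_ne_zero (heq ▸ hne)))

lemma dO_sub_dO_Jeps :
    dO f (mrca f s t) s - dO (Jeps f ε) (mrca (Jeps f ε) s t) s =
      (if mrca f s t < mrca (Jeps f ε) s t then
        cdel (Jeps f ε) (mrca (Jeps f ε) s t) 0 (xst (Jeps f ε) (mrca (Jeps f ε) s t) s) else 0)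
      + ∑' r, if mrca f s t < r ∧ r ∉ F then cdel f r 0 (xst f r s) else 0 := by
  have hg := hf.isWeakExcursion_Jeps hF
  rw [hf.dO_eq_tsum (hf.pre_mrca_left hs ht), hg.dO_eq_tsum (hg.pre_mrca_left hs ht)]
  set m := mrca f s t
  set m' := mrca (Jeps f ε) s t
  have hmm' : m ≤ m' := hf.mrca_le_mrca_Jeps hF hs ht
  rw [← (hf.summable_ite_cdel_zero_xst _ s).tsum_sub (hg.summable_ite_cdel_zero_xst _ s),
    add_comm,
    ← (hasSum_ite_eq m' (if m < m' then cdel (Jeps f ε) m' 0 (xst (Jeps f ε) m' s) else 0)).tsum_eq,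
    ← (hf.summable_ite_cdel_zero_xst _ s).tsum_add (hasSum_ite_eq m' _).summable]
  -- termwise: among the big loops only `r = m'` survives, those in `(m, m')` being unvisited
  refine tsum_congr fun r => ?_
  simp only [hf.cdel_xst_Jeps hF]
  by_cases hrF : r ∈ F
  · rcases lt_trichotomy r m' with h | rfl | h
    · have hτ : m < r → cdel f r 0 (xst f r s) = 0 := fun hmr => by
        rw [hf.xst_eq_zero_of_mem_Ioo_mrca hF hs ht hrF ⟨hmr, h⟩, hf.cdel_self]
      by_cases hmr : m < r <;> simp [hrF, hmr, h.ne, h.not_gt, hτ]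
    · simp [hrF]
    · simp [hrF, h.ne', h, hmm'.trans_lt h]
  · by_cases hrm : r = m'
    · rw [hrm] at hrF ⊢
      simp [hrF]
    · simp [hrF, hrm]

/-- This is what remains of `dL f s t - dL (Jeps f ε) s t` once the small loops are taken out
(`dO_sub_dO_Jeps`). -/
lemma cdel_mrca_sub_cdel_mrca_Jeps_mem_Icc :
    cdel f (mrca f s t) (xst f (mrca f s t) s) (xst f (mrca f s t) t)
        + (if mrca f s t < mrca (Jeps f ε) s t then
            cdel (Jeps f ε) (mrca (Jeps f ε) s t) 0 (xst (Jeps f ε) (mrca (Jeps f ε) s t) s) else 0)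
        + (if mrca f s t < mrca (Jeps f ε) s t then
            cdel (Jeps f ε) (mrca (Jeps f ε) s t) 0 (xst (Jeps f ε) (mrca (Jeps f ε) s t) t) else 0)
        - cdel (Jeps f ε) (mrca (Jeps f ε) s t) (xst (Jeps f ε) (mrca (Jeps f ε) s t) s)
            (xst (Jeps f ε) (mrca (Jeps f ε) s t) t)
      ∈ Icc 0 ((if mrca f s t ∈ F then 0 else xst f (mrca f s t) s)
        + (if mrca f s t ∈ F then 0 else xst f (mrca f s t) t)) := by
  have hg := hf.isWeakExcursion_Jeps hF
  have hA0 : 0 ≤ cdel f (mrca f s t) (xst f (mrca f s t) s) (xst f (mrca f s t) t) :=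
    cdel_nonneg xst_nonneg hf.xst_le_jump xst_nonneg hf.xst_le_jump
  have hA : cdel f (mrca f s t) (xst f (mrca f s t) s) (xst f (mrca f s t) t)
      ≤ xst f (mrca f s t) s + xst f (mrca f s t) t :=
    cdel_le_abs_sub.trans (abs_sub_le_iff.2
      ⟨by linarith [xst_nonneg (φ := f) (r := mrca f s t) (u := t)],
        by linarith [xst_nonneg (φ := f) (r := mrca f s t) (u := s)]⟩)
  rcases (hf.mrca_le_mrca_Jeps hF hs ht).eq_or_lt with heq | hlt
  · simp only [← heq, lt_irrefl, if_false, hf.xst_Jeps hF _ s, hf.xst_Jeps hF _ t]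
    by_cases hmF : mrca f s t ∈ F
    · simp only [if_pos hmF, hf.cdel_Jeps_of_mem hF hmF]
      constructor <;> linarith
    · simp only [if_neg hmF, hg.cdel_self]
      constructor <;> linarith
  · have hzero : xst (Jeps f ε) (mrca (Jeps f ε) s t) s = 0
        ∨ xst (Jeps f ε) (mrca (Jeps f ε) s t) t = 0 := by
      by_contra! h
      rw [hf.xst_Jeps hF, hf.xst_Jeps hF] at h
      have hmF : mrca (Jeps f ε) s t ∈ F := by_contra fun hn => by simp [hn] at h
      rw [if_pos hmF, if_pos hmF] at h
      exact hlt.not_ge (le_mrca ((hf.mrca_nonneg hs ht).trans hlt.le)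
        (pre_of_xst_ne_zero h.1) (pre_of_xst_ne_zero h.2))
    simp only [if_pos hlt, hg.cdel_eq_add hzero]
    by_cases hmF : mrca f s t ∈ F
    · simp only [if_pos hmF, hf.xst_eq_xst_of_lt_mrca_Jeps hF hs ht hmF hlt, hf.cdel_self]
      constructor <;> linarith
    · simp only [if_neg hmF]
      constructor <;> linarith

theorem dL_sub_dL_Jeps_mem_Icc :
    dL f s t - dL (Jeps f ε) s t ∈ Icc 0 ((Jop f s - Jeps f ε s) + (Jop f t - Jeps f ε t)) := by
  have hds := hf.dO_sub_dO_Jeps hF hs ht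
  have hdt := hf.dO_sub_dO_Jeps hF ht hs
  rw [mrca_comm f t s, mrca_comm (Jeps f ε) t s] at hdt
  have htop := hf.cdel_mrca_sub_cdel_mrca_Jeps_mem_Icc hF hs ht
  have hSs := hf.tsum_cdel_add_le_Jop_sub_Jeps hF (mrca f s t) s
  have hSt := hf.tsum_cdel_add_le_Jop_sub_Jeps hF (mrca f s t) t
  have hS0 : ∀ u, 0 ≤ ∑' r, if mrca f s t < r ∧ r ∉ F then cdel f r 0 (xst f r u) else 0 :=
    fun u => tsum_nonneg fun r => by split_ifs; exacts [hf.cdel_zero_xst_nonneg, le_rfl]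
  unfold dL
  constructor <;> linarith [htop.1, htop.2, hS0 s, hS0 t]

end IsWeakExcursion

theorem statement13 (f : ℝ → ℝ) (hf : IsExcursion f) (ε : ℝ) (hε : ε ∈ Ioo (0:ℝ) 1)
    (C : ℝ) (hC : ∀ u ∈ Icc (0:ℝ) 1, |Jop f u - Jeps f ε u| ≤ C) :
    ∀ s ∈ Icc (0:ℝ) 1, ∀ t ∈ Icc (0:ℝ) 1,
      |dL f s t - dL (Jeps f ε) s t| ≤ 2 * C := by
  intro s hs t ht
  have hfin := hf.finite_setOf_le_jump hε.1
  obtain ⟨hlow, hup⟩ := hf.isWeakExcursion.dL_sub_dL_Jeps_mem_Icc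
    (fun q => hfin.mem_toFinset) hs.1 ht.1
  have hCs := hC s hs
  have hCt := hC t ht
  rw [abs_le]
  constructor <;> linarith [le_abs_self (Jop f s - Jeps f ε s), le_abs_self (Jop f t - Jeps f ε t),
    abs_nonneg (Jop f s - Jeps f ε s)]
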